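/- In the evidence-based simply-typed gradual calculus, progress holds: every closed well-typed term is a value, steps to another term, or steps to error; and the only source of error is an undefined consistent-transitivity (meet) of evidences. -/
import Mathlib


inductive GType : Type
  | int
  | bool
  | unk
  | arrow (a b : GType)
deriving DecidableEq

/-- Consistency on gradual types. -/
inductive Consist : GType → GType → Prop
  | unkL (G : GType) : Consist GType.unk G
  | unkR (G : GType) : Consist G GType.unk
  | int : Consist GType.int GType.int
  | bool : Consist GType.bool GType.bool
  | arrow {a a' b b' : GType} : Consist a a' → Consist b b' →
      Consist (GType.arrow a b) (GType.arrow a' b')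

/-- Syntactic precision on gradual types. -/
inductive SPrec : GType → GType → Prop
  | unk (G : GType) : SPrec G GType.unk
  | int : SPrec GType.int GType.int
  | bool : SPrec GType.bool GType.bool
  | arrow {a a' b b' : GType} : SPrec a a' → SPrec b b' →
      SPrec (GType.arrow a b) (GType.arrow a' b')

/-- Partial precision meet on gradual types. -/
def gmeet : GType → GType → Option GType
  | g, GType.unk => some g
  | GType.unk, g => some g
  | GType.int, GType.int => some GType.int
  | GType.bool, GType.bool => some GType.bool
  | GType.arrow a b, GType.arrow a' b' =>
      match gmeet a a', gmeet b b' with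
      | some x, some y => some (GType.arrow x y)
      | _, _ => none
  | _, _ => none

mutual
/-- Terms of the evidence-decorated gradual calculus.
`val ε u G` is an evidence value `ε u` ascribed at type `G`;
`asc ε t G` is an evidence ascription of an arbitrary term. -/
inductive Tm : Type
  | var (x : String)
  | val (ε : GType) (u : Raw) (G : GType)
  | app (t1 t2 : Tm)
  | asc (ε : GType) (t : Tm) (G : GType)

/-- Raw values: booleans, integers, lambda abstractions. -/
inductive Raw : Type
  | rbool (b : Bool)
  | rint (n : Int)
  | rlam (x : String) (G : GType) (t : Tm)
end

mutual
def substTm (x : String) (v : Tm) : Tm → Tm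
  | Tm.var y => if y = x then v else Tm.var y
  | Tm.val ε u G => Tm.val ε (substRaw x v u) G
  | Tm.app t1 t2 => Tm.app (substTm x v t1) (substTm x v t2)
  | Tm.asc ε t G => Tm.asc ε (substTm x v t) G

def substRaw (x : String) (v : Tm) : Raw → Raw
  | Raw.rbool b => Raw.rbool b
  | Raw.rint n => Raw.rint n
  | Raw.rlam y G t => if y = x then Raw.rlam y G t else Raw.rlam y G (substTm x v t)
end

/-- Context update. -/
def upd (Γ : String → Option GType) (x : String) (G : GType) : String → Option GType :=
  fun y => if y = x then some G else Γ y

/-- The empty typing context. -/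
def emptyCtx : String → Option GType := fun _ => none

mutual
/-- Typing of terms: standard simply-typed rules with exact type equality at
application; consistency, justified by evidence `ε` (with `ε ⊑` both types),
appears only at (value) ascriptions. -/
inductive HasTy : (String → Option GType) → Tm → GType → Prop
  | var {Γ x G} : Γ x = some G → HasTy Γ (Tm.var x) G
  | val {Γ ε u G1 G2} : RawTy Γ u G1 → SPrec ε G1 → SPrec ε G2 →
      HasTy Γ (Tm.val ε u G2) G2
  | app {Γ t1 t2 G1 G2} : HasTy Γ t1 (GType.arrow G1 G2) → HasTy Γ t2 G1 →
      HasTy Γ (Tm.app t1 t2) G2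
  | asc {Γ ε t G1 G2} : HasTy Γ t G1 → SPrec ε G1 → SPrec ε G2 →
      HasTy Γ (Tm.asc ε t G2) G2

/-- Typing of raw values. -/
inductive RawTy : (String → Option GType) → Raw → GType → Prop
  | rbool {Γ b} : RawTy Γ (Raw.rbool b) GType.bool
  | rint {Γ n} : RawTy Γ (Raw.rint n) GType.int
  | rlam {Γ x G1 t G2} : HasTy (upd Γ x G1) t G2 →
      RawTy Γ (Raw.rlam x G1 t) (GType.arrow G1 G2)
end

/-- Domain of a function-type evidence. -/
def gdom : GType → Option GType
  | GType.arrow a _ => some a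
  | _ => none

/-- Codomain of a function-type evidence. -/
def gcod : GType → Option GType
  | GType.arrow _ b => some b
  | _ => none

/-- Result of a reduction step: a term or a runtime error. -/
inductive Res : Type
  | term (t : Tm)
  | error

/-- Small-step reduction. Errors arise exactly from undefined meets. -/
inductive Step : Tm → Res → Prop
  | ascv {ε1 ε2 ε : GType} {u G1 G2} : gmeet ε1 ε2 = some ε →
      Step (Tm.asc ε2 (Tm.val ε1 u G1) G2) (Res.term (Tm.val ε u G2))
  | ascvErr {ε1 ε2 : GType} {u G1 G2} : gmeet ε1 ε2 = none →
      Step (Tm.asc ε2 (Tm.val ε1 u G1) G2) Res.error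
  | beta {ε1 ε2 εd εc ε : GType} {x Gx t GA GB u Gu} :
      gdom ε1 = some εd → gcod ε1 = some εc → gmeet ε2 εd = some ε →
      Step (Tm.app (Tm.val ε1 (Raw.rlam x Gx t) (GType.arrow GA GB)) (Tm.val ε2 u Gu))
           (Res.term (Tm.asc εc (substTm x (Tm.val ε u Gx) t) GB))
  | betaErr {ε1 ε2 εd : GType} {x Gx t GA GB u Gu} :
      gdom ε1 = some εd → gmeet ε2 εd = none →
      Step (Tm.app (Tm.val ε1 (Raw.rlam x Gx t) (GType.arrow GA GB)) (Tm.val ε2 u Gu))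
           Res.error
  | appL {t1 t1' t2} : Step t1 (Res.term t1') →
      Step (Tm.app t1 t2) (Res.term (Tm.app t1' t2))
  | appLErr {t1 t2} : Step t1 Res.error → Step (Tm.app t1 t2) Res.error
  | appR {ε u G t2 t2'} : Step t2 (Res.term t2') →
      Step (Tm.app (Tm.val ε u G) t2) (Res.term (Tm.app (Tm.val ε u G) t2'))
  | appRErr {ε u G t2} : Step t2 Res.error →
      Step (Tm.app (Tm.val ε u G) t2) Res.error
  | ascCong {ε t t' G} : Step t (Res.term t') →
      Step (Tm.asc ε t G) (Res.term (Tm.asc ε t' G))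
  | ascCongErr {ε t G} : Step t Res.error → Step (Tm.asc ε t G) Res.error

/-- Values are evidence-ascribed raw values `ε u`. -/
def IsValue (t : Tm) : Prop := ∃ (ε : GType) (u : Raw) (G : GType), t = Tm.val ε u G

lemma sprec_arrow {ε a b : GType} (h : SPrec ε (GType.arrow a b)) :
    ∃ c d, ε = GType.arrow c d := by
  cases h with
  | arrow _ _ => exact ⟨_, _, rfl⟩

lemma sprec_arrow' {c d G : GType} (h : SPrec (GType.arrow c d) G) :
    G = GType.unk ∨ ∃ a b, G = GType.arrow a b := by
  cases h with
  | unk => exact Or.inl rfl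
  | arrow _ _ => exact Or.inr ⟨_, _, rfl⟩

lemma rawty_arrow {Γ u G} (h : RawTy Γ u G)
    (ha : G = GType.unk ∨ ∃ a b, G = GType.arrow a b) :
    ∃ x Gx t, u = Raw.rlam x Gx t := by
  cases h with
  | rbool => rcases ha with h | ⟨a, b, h⟩ <;> simp at h
  | rint => rcases ha with h | ⟨a, b, h⟩ <;> simp at h
  | rlam _ => exact ⟨_, _, _, rfl⟩

lemma step_error {t r} (h : Step t r) (hr : r = Res.error) :
    ∃ ε1 ε2 : GType, gmeet ε1 ε2 = none := by
  induction h with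
  | ascv _ => cases hr
  | ascvErr hm => exact ⟨_, _, hm⟩
  | beta _ _ _ => cases hr
  | betaErr _ hm => exact ⟨_, _, hm⟩
  | appL _ _ => cases hr
  | appLErr _ ih => exact ih rfl
  | appR _ _ => cases hr
  | appRErr _ ih => exact ih rfl
  | ascCong _ _ => cases hr
  | ascCongErr _ ih => exact ih rfl

/-- Progress: a closed well-typed term is a value, steps, or errors; and the
only source of error is an undefined consistent-transitivity (meet). -/
theorem progress :
    (∀ (t : Tm) (G : GType), HasTy emptyCtx t G →
        IsValue t ∨ (∃ t' : Tm, Step t (Res.term t')) ∨ Step t Res.error) ∧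
    (∀ t : Tm, Step t Res.error →
        ∃ ε1 ε2 : GType, gmeet ε1 ε2 = none) := by
  constructor
  · have main : ∀ t : Tm, ∀ G, HasTy emptyCtx t G →
        IsValue t ∨ (∃ t' : Tm, Step t (Res.term t')) ∨ Step t Res.error := by
      refine fun t => Tm.rec (motive_1 := fun t => ∀ G, HasTy emptyCtx t G →
          IsValue t ∨ (∃ t' : Tm, Step t (Res.term t')) ∨ Step t Res.error)
        (motive_2 := fun _ => True) ?_ ?_ ?_ ?_ (fun _ => trivial) (fun _ => trivial) (fun _ _ _ _ => trivial) t
      · intro x G h; cases h with | var hx => simp [emptyCtx] at hx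
      · intro ε u G _ G' h; exact Or.inl ⟨ε, u, G, rfl⟩
      · intro t1 t2 ih1 ih2 G h
        cases h with
        | app h1 h2 =>
          rcases ih1 _ h1 with ⟨ε1, u1, G1', rfl⟩ | ⟨t1', hs⟩ | hs
          · rcases ih2 _ h2 with ⟨ε2, u2, G2', rfl⟩ | ⟨t2', hs⟩ | hs
            · cases h1 with
              | val hraw hp1 hp2 =>
                rcases sprec_arrow hp2 with ⟨c, d, rfl⟩
                rcases rawty_arrow hraw (sprec_arrow' hp1) with ⟨x, Gx, tb, rfl⟩
                cases hm : gmeet ε2 c with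
                | some ε =>
                  exact Or.inr (Or.inl ⟨_, Step.beta rfl rfl hm⟩)
                | none =>
                  exact Or.inr (Or.inr (Step.betaErr rfl hm))
            · exact Or.inr (Or.inl ⟨_, Step.appR hs⟩)
            · exact Or.inr (Or.inr (Step.appRErr hs))
          · exact Or.inr (Or.inl ⟨_, Step.appL hs⟩)
          · exact Or.inr (Or.inr (Step.appLErr hs))
      · intro ε t G ih G' h
        cases h with
        | asc ht hp1 hp2 =>
          rcases ih _ ht with ⟨ε1, u, G1', rfl⟩ | ⟨t', hs⟩ | hs
          · cases hm : gmeet ε1 ε with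
            | some ε' => exact Or.inr (Or.inl ⟨_, Step.ascv hm⟩)
            | none => exact Or.inr (Or.inr (Step.ascvErr hm))
          · exact Or.inr (Or.inl ⟨_, Step.ascCong hs⟩)
          · exact Or.inr (Or.inr (Step.ascCongErr hs))
    exact main
  · intro t hs
    exact step_error hs rfl
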